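/- Let M be a finite matroid with ground set E. Then there exist integers n ≥ k ≥ 2 and a partition of E into pairwise disjoint sets E₁, E₂, E₃ with |E₁| = |E₂| = n and |E₃| = k such that the independent sets of M are exactly the subsets I of E with |I| ≤ n, I ≠ E₁, I ≠ E₂ and E₃ ⊄ I (that is, M is isomorphic to B_{n,k} for some n ≥ k ≥ 2) if and only if M has a non-spanning circuit C such that C is freely placed and coindependent, |C| ≥ 2, and there exist an integer m ≥ 2 and a partition of E \ C into disjoint sets C₁ and C₂ with |C₁| = |C₂| = m such that the independent sets of M \ C are exactly the subsets I of E \ C with |I| ≤ m, I ≠ C₁ and I ≠ C₂ (that is, M \ C is isomorphic to P_m). -/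

import Mathlib

open Set

namespace Matroid

variable {α β : Type*}

/-- A circuit of a matroid is a minimal dependent set. -/
def Circuit (M : Matroid α) (C : Set α) : Prop :=
  M.Dep C ∧ ∀ ⦃D : Set α⦄, M.Dep D → D ⊆ C → D = C

/-- The rank of a set `X` in a matroid `M` : the maximum cardinality of an
independent subset of `X`. -/
noncomputable def rkOn (M : Matroid α) (X : Set α) : ℕ :=
  sSup {n | ∃ I, M.Indep I ∧ I ⊆ X ∧ I.ncard = n}

/-- The rank of a matroid : the rank of its ground set. -/
noncomputable def rank (M : Matroid α) : ℕ := M.rkOn M.E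

/-- A hyperplane : a flat whose rank is one less than the rank of the matroid. -/
def Hyperplane (M : Matroid α) (H : Set α) : Prop :=
  M.IsFlat H ∧ M.rkOn H + 1 = M.rank

/-- Deletion of the set `D` from the matroid `M`. -/
def delete' (M : Matroid α) (D : Set α) : Matroid α := M.restrict (M.E \ D)

/-- Contraction of the set `C` in the matroid `M`. -/
def contract' (M : Matroid α) (C : Set α) : Matroid α := ((M✶).delete' C)✶

/-- A circuit `C` of `M` is freely placed if every circuit `C'` of `M` with `C' ≠ C`
and `C' ∩ C ≠ ∅` is spanning. -/
def FreelyPlaced (M : Matroid α) (C : Set α) : Prop :=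
  ∀ ⦃C' : Set α⦄, M.Circuit C' → C' ≠ C → (C' ∩ C).Nonempty → M.Spanning C'

/-- A coloop is an element belonging to every base. -/
def Coloop (M : Matroid α) (e : α) : Prop := ∀ ⦃B : Set α⦄, M.IsBase B → e ∈ B

/-- An element `e` is free in `M` if it is not a coloop and every circuit
containing `e` is spanning. -/
def FreeElem (M : Matroid α) (e : α) : Prop :=
  e ∈ M.E ∧ ¬ M.Coloop e ∧ ∀ ⦃C : Set α⦄, M.Circuit C → e ∈ C → M.Spanning C

/-- A loop is an element `e` such that `{e}` is a circuit. -/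
def IsLoop' (M : Matroid α) (e : α) : Prop := M.Circuit {e}

/-- Two non-loop elements of the ground set are parallel if they are equal or
form a two-element circuit. -/
def Parallel (M : Matroid α) (e f : α) : Prop :=
  e ∈ M.E ∧ f ∈ M.E ∧ ¬ M.IsLoop' e ∧ ¬ M.IsLoop' f ∧ (e = f ∨ M.Circuit {e, f})

/-- Two matroids are isomorphic if there is a bijection between their ground sets
mapping independent sets to independent sets. -/
def IsIso (M : Matroid α) (N : Matroid β) : Prop :=
  ∃ e : M.E ≃ N.E, ∀ I : Set M.E,
    M.Indep (Subtype.val '' I) ↔ N.Indep (Subtype.val '' (e '' I))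

/-!
On both sides `M` has rank `n = m`: an `n`-subset of `E₁ ∪ E₂` other than `E₁` and `E₂` is
independent, and no independent set is larger. In a matroid of rank `r` a circuit is spanning
iff it has more than `r` elements, which turns "freely placed" and "non-spanning" into
statements about cardinalities. For the converse, a dependent `I` with `|I| ≤ m` and `C ⊄ I`
contains a circuit `C' ≠ C`; if `C'` meets `C` it is spanning, hence larger than `I`, and
otherwise it is a circuit of `M \ C ≅ P_m`, i.e. `C₁` or `C₂`, which forces `I = C₁` or `I = C₂`.
-/

lemma _root_.Set.exists_subset_union_ncard_eq_ne_ne {A B : Set α} (hAB : Disjoint A B)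
    (hA : 2 ≤ A.ncard) (hB : B.Nonempty) :
    ∃ J ⊆ A ∪ B, J.ncard = A.ncard ∧ J ≠ A ∧ J ≠ B := by
  obtain ⟨a, ha⟩ := nonempty_of_ncard_ne_zero (s := A) (by omega)
  obtain ⟨a', ha', ha'a⟩ := exists_ne_of_one_lt_ncard (s := A) (by omega) a
  obtain ⟨b, hb⟩ := hB
  have hbA : b ∉ A := disjoint_right.mp hAB hb
  refine ⟨insert b (A \ {a}), insert_subset (Or.inr hb) (sdiff_subset.trans subset_union_left),
    ?_, fun h => hbA (h ▸ mem_insert b _), fun h => disjoint_left.mp hAB ha' ?_⟩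
  · rw [ncard_insert_of_notMem (fun h => hbA h.1) (finite_of_ncard_pos (by omega)).sdiff,
      ncard_sdiff_singleton_of_mem ha]
    omega
  · exact h ▸ mem_insert_of_mem b ⟨ha', ha'a⟩

lemma circuit_iff_isCircuit {M : Matroid α} {C : Set α} : M.Circuit C ↔ M.IsCircuit C :=
  isCircuit_iff.symm

lemma delete'_indep_iff {M : Matroid α} {D I : Set α} :
    (M.delete' D).Indep I ↔ M.Indep I ∧ I ⊆ M.E \ D :=
  restrict_indep_iff

section Rank

variable {M : Matroid α} [M.Finite] {r : ℕ} {B I J C : Set α}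

lemma IsBase.ncard_eq_of_indep (hB : M.IsBase B) (hJ : M.Indep J) (hBJ : B.ncard ≤ J.ncard) :
    B.ncard = J.ncard := by
  obtain ⟨B', hB', hJB'⟩ := hJ.exists_isBase_superset
  rw [hB.ncard_eq_ncard_of_isBase hB'] at hBJ ⊢
  exact hBJ.antisymm (ncard_le_ncard hJB' hB'.finite)

lemma Indep.ncard_le (hr : ∀ B, M.IsBase B → B.ncard = r) (hI : M.Indep I) : I.ncard ≤ r := by
  obtain ⟨B, hB, hIB⟩ := hI.exists_isBase_superset
  exact hr B hB ▸ ncard_le_ncard hIB hB.finite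

lemma Indep.isBase_of_le_ncard (hr : ∀ B, M.IsBase B → B.ncard = r) (hI : M.Indep I)
    (hIr : r ≤ I.ncard) : M.IsBase I := by
  obtain ⟨B, hB, hIB⟩ := hI.exists_isBase_superset
  rwa [eq_of_subset_of_ncard_le hIB (hr B hB ▸ hIr) hB.finite]

lemma IsCircuit.spanning_iff_lt_ncard (hr : ∀ B, M.IsBase B → B.ncard = r)
    (hC : M.IsCircuit C) : M.Spanning C ↔ r < C.ncard := by
  constructor
  · intro hCsp
    obtain ⟨B, hB, hBC⟩ := (spanning_iff_exists_isBase_subset hC.subset_ground).1 hCsp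
    have hBC' : B ⊂ C := hBC.ssubset_of_ne (by rintro rfl; exact hC.not_indep hB.indep)
    exact hr B hB ▸ ncard_lt_ncard hBC' (M.set_finite C hC.subset_ground)
  · intro hrC
    obtain ⟨c, hc⟩ := hC.nonempty
    have hrc : r ≤ (C \ {c}).ncard := by
      rw [ncard_sdiff_singleton_of_mem hc]
      omega
    exact ((hC.sdiff_singleton_indep hc).isBase_of_le_ncard hr hrc).spanning_of_superset
      sdiff_subset hC.subset_ground

end Rank

section Bnk

variable {M : Matroid α} [M.Finite] {n : ℕ} {E₁ E₂ E₃ : Set α}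

lemma isCircuit_of_indep_iff_bnk (hE₁ : E₁.Nonempty) (hE₂ : E₂.Nonempty)
    (h13 : Disjoint E₁ E₃) (h23 : Disjoint E₂ E₃) (hE₃ : E₃ ⊆ M.E) (h3n : E₃.ncard ≤ n)
    (hind : ∀ I : Set α, M.Indep I ↔
      (I ⊆ M.E ∧ I.ncard ≤ n ∧ I ≠ E₁ ∧ I ≠ E₂ ∧ ¬ E₃ ⊆ I)) :
    M.IsCircuit E₃ := by
  refine isCircuit_iff_forall_ssubset.2 ⟨⟨fun h => ((hind E₃).1 h).2.2.2.2 subset_rfl, hE₃⟩,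
    fun I hI => (hind I).2 ⟨hI.subset.trans hE₃, ?_, ?_, ?_, hI.not_subset⟩⟩
  · exact (ncard_lt_ncard hI (M.set_finite E₃ hE₃)).le.trans h3n
  · rintro rfl
    exact hE₁.ne_empty (h13.eq_bot_of_le hI.subset)
  · rintro rfl
    exact hE₂.ne_empty (h23.eq_bot_of_le hI.subset)

lemma freelyPlaced_of_indep_iff_bnk (hr : ∀ B, M.IsBase B → B.ncard = n)
    (h13 : Disjoint E₁ E₃) (h23 : Disjoint E₂ E₃) (hE₃ : M.IsCircuit E₃)
    (hind : ∀ I : Set α, M.Indep I ↔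
      (I ⊆ M.E ∧ I.ncard ≤ n ∧ I ≠ E₁ ∧ I ≠ E₂ ∧ ¬ E₃ ⊆ I)) :
    M.FreelyPlaced E₃ := by
  rintro C hC hCE₃ ⟨x, hxC, hxE₃⟩
  rw [circuit_iff_isCircuit] at hC
  rw [hC.spanning_iff_lt_ncard hr, ← not_le]
  refine fun hCn => hC.not_indep ((hind C).2 ⟨hC.subset_ground, hCn, ?_, ?_,
    fun h => hCE₃ (hE₃.eq_of_subset_isCircuit hC h).symm⟩)
  · rintro rfl
    exact disjoint_left.mp h13 hxC hxE₃
  · rintro rfl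
    exact disjoint_left.mp h23 hxC hxE₃

lemma freelyPlaced_isCircuit_of_indep_iff_bnk (hn : 2 ≤ n) (hE₃n : E₃.Nonempty)
    (h3n : E₃.ncard ≤ n) (h12 : Disjoint E₁ E₂) (h13 : Disjoint E₁ E₃) (h23 : Disjoint E₂ E₃)
    (hE : E₁ ∪ E₂ ∪ E₃ = M.E) (hE₁ : E₁.ncard = n) (hE₂ : E₂.ncard = n)
    (hind : ∀ I : Set α, M.Indep I ↔
      (I ⊆ M.E ∧ I.ncard ≤ n ∧ I ≠ E₁ ∧ I ≠ E₂ ∧ ¬ E₃ ⊆ I)) :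
    M.IsCircuit E₃ ∧ ¬ M.Spanning E₃ ∧ M.FreelyPlaced E₃ ∧ M.Coindep E₃ ∧
      E₁ ∪ E₂ = M.E \ E₃ ∧
      ∀ I : Set α, (M.delete' E₃).Indep I ↔ (I ⊆ M.E \ E₃ ∧ I.ncard ≤ n ∧ I ≠ E₁ ∧ I ≠ E₂) := by
  have hE₂n : E₂.Nonempty := nonempty_of_ncard_ne_zero (by omega)
  have hground : E₁ ∪ E₂ = M.E \ E₃ := by
    rw [← hE, union_sdiff_right, (disjoint_union_left.2 ⟨h13, h23⟩).sdiff_eq_left]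
  obtain ⟨e, he⟩ := hE₃n
  have hsdiff {I : Set α} (hI : I ⊆ M.E \ E₃) : ¬ E₃ ⊆ I := fun h => (hI (h he)).2 he
  obtain ⟨J, hJ12, hJn, hJ1, hJ2⟩ := exists_subset_union_ncard_eq_ne_ne h12 (hE₁ ▸ hn) hE₂n
  rw [hground] at hJ12
  rw [hE₁] at hJn
  have hJ : M.Indep J := (hind J).2 ⟨hJ12.trans sdiff_subset, hJn.le, hJ1, hJ2, hsdiff hJ12⟩
  have hr (B : Set α) (hB : M.IsBase B) : B.ncard = n :=
    hJn ▸ hB.ncard_eq_of_indep hJ (hJn ▸ ((hind B).1 hB.indep).2.1)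
  have hE₃ := isCircuit_of_indep_iff_bnk (nonempty_of_ncard_ne_zero (by omega)) hE₂n h13 h23
    (hE ▸ subset_union_right) h3n hind
  refine ⟨hE₃, by rw [hE₃.spanning_iff_lt_ncard hr]; omega,
    freelyPlaced_of_indep_iff_bnk hr h13 h23 hE₃ hind,
    (coindep_iff_exists hE₃.subset_ground).2 ⟨J, hJ.isBase_of_le_ncard hr hJn.ge, hJ12⟩,
    hground, fun I => ?_⟩
  rw [delete'_indep_iff, hind]
  exact ⟨fun ⟨⟨_, hIn, hI1, hI2, _⟩, hI⟩ => ⟨hI, hIn, hI1, hI2⟩,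
    fun ⟨hI, hIn, hI1, hI2⟩ => ⟨⟨hI.trans sdiff_subset, hIn, hI1, hI2, hsdiff hI⟩, hI⟩⟩

end Bnk

section FreelyPlaced

variable {M : Matroid α} [M.Finite] {m : ℕ} {C C₁ C₂ : Set α}

lemma FreelyPlaced.indep_of_ncard_le (hfp : M.FreelyPlaced C)
    (hr : ∀ B, M.IsBase B → B.ncard = m) (hC₁ : C₁.ncard = m) (hC₂ : C₂.ncard = m)
    (hdel : ∀ I ⊆ M.E \ C, I.ncard ≤ m → I ≠ C₁ → I ≠ C₂ → M.Indep I)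
    {I : Set α} (hIE : I ⊆ M.E) (hIm : I.ncard ≤ m) (hI₁ : I ≠ C₁) (hI₂ : I ≠ C₂)
    (hCI : ¬ C ⊆ I) : M.Indep I := by
  by_contra hI
  obtain ⟨C', hC'I, hC'⟩ := Dep.exists_isCircuit_subset ⟨hI, hIE⟩
  have hIfin : I.Finite := M.set_finite I hIE
  have hC'm : C'.ncard ≤ m := (ncard_le_ncard hC'I hIfin).trans hIm
  by_cases hmeet : (C' ∩ C).Nonempty
  · have hC'C : C' ≠ C := by
      rintro rfl
      exact hCI hC'I
    have := (hC'.spanning_iff_lt_ncard hr).1 (hfp (circuit_iff_isCircuit.2 hC') hC'C hmeet)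
    omega
  -- `C'` is then a circuit of `M \ C`, so it is `C₁` or `C₂`, and it fills `I`.
  have hC'sub : C' ⊆ M.E \ C := fun x hx => ⟨hC'.subset_ground hx, fun hxC => hmeet ⟨x, hx, hxC⟩⟩
  by_cases hC'₁ : C' = C₁
  · exact hI₁ (eq_of_subset_of_ncard_le (hC'₁ ▸ hC'I) (hC₁ ▸ hIm) hIfin).symm
  by_cases hC'₂ : C' = C₂
  · exact hI₂ (eq_of_subset_of_ncard_le (hC'₂ ▸ hC'I) (hC₂ ▸ hIm) hIfin).symm
  exact hC'.not_indep (hdel C' hC'sub hC'm hC'₁ hC'₂)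

lemma FreelyPlaced.indep_iff_bnk (hfp : M.FreelyPlaced C) (hC : M.IsCircuit C)
    (hCsp : ¬ M.Spanning C) (hCco : M.Coindep C) (hm : 2 ≤ m) (h12 : Disjoint C₁ C₂)
    (hunion : C₁ ∪ C₂ = M.E \ C) (hC₁ : C₁.ncard = m) (hC₂ : C₂.ncard = m)
    (hdel : ∀ I : Set α, (M.delete' C).Indep I ↔ (I ⊆ M.E \ C ∧ I.ncard ≤ m ∧ I ≠ C₁ ∧ I ≠ C₂)) :
    C.ncard ≤ m ∧
      ∀ I : Set α, M.Indep I ↔ (I ⊆ M.E ∧ I.ncard ≤ m ∧ I ≠ C₁ ∧ I ≠ C₂ ∧ ¬ C ⊆ I) := by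
  have hdel' (I : Set α) :
      M.Indep I ∧ I ⊆ M.E \ C ↔ (I ⊆ M.E \ C ∧ I.ncard ≤ m ∧ I ≠ C₁ ∧ I ≠ C₂) :=
    delete'_indep_iff.symm.trans (hdel I)
  have hC₂n : C₂.Nonempty := nonempty_of_ncard_ne_zero (by omega)
  obtain ⟨J, hJ12, hJm, hJ1, hJ2⟩ := exists_subset_union_ncard_eq_ne_ne h12 (hC₁ ▸ hm) hC₂n
  rw [hC₁] at hJm
  have hJ : M.Indep J := ((hdel' J).2 ⟨hunion ▸ hJ12, hJm.le, hJ1, hJ2⟩).1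
  obtain ⟨B₀, hB₀, hB₀C⟩ := (coindep_iff_exists hC.subset_ground).1 hCco
  have hr (B : Set α) (hB : M.IsBase B) : B.ncard = m := by
    rw [hB.ncard_eq_ncard_of_isBase hB₀, ← hJm]
    exact hB₀.ncard_eq_of_indep hJ (hJm ▸ ((hdel' B₀).1 ⟨hB₀.indep, hB₀C⟩).2.1)
  refine ⟨not_lt.1 fun h => hCsp ((hC.spanning_iff_lt_ncard hr).2 h), fun I => ⟨fun hI => ?_, ?_⟩⟩
  · refine ⟨hI.subset_ground, hI.ncard_le hr, ?_, ?_, fun h => hC.not_indep (hI.subset h)⟩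
    · rintro rfl
      exact ((hdel' I).1 ⟨hI, hunion ▸ subset_union_left⟩).2.2.1 rfl
    · rintro rfl
      exact ((hdel' I).1 ⟨hI, hunion ▸ subset_union_right⟩).2.2.2 rfl
  · rintro ⟨hIE, hIm, hI₁, hI₂, hCI⟩
    exact hfp.indep_of_ncard_le hr hC₁ hC₂
      (fun I hI hIm hI₁ hI₂ => ((hdel' I).2 ⟨hI, hIm, hI₁, hI₂⟩).1) hIE hIm hI₁ hI₂ hCI

end FreelyPlaced

/-- A finite matroid is a copy of `B_{n,k}` for some `n ≥ k ≥ 2` iff it has a freely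
placed coindependent non-spanning circuit `C` with `|C| ≥ 2` whose deletion is a copy
of `P_m` for some `m ≥ 2`. -/
theorem bnk_iff (M : Matroid α) [M.Finite] :
    (∃ (n k : ℕ) (E₁ E₂ E₃ : Set α), 2 ≤ k ∧ k ≤ n ∧
      Disjoint E₁ E₂ ∧ Disjoint E₁ E₃ ∧ Disjoint E₂ E₃ ∧ E₁ ∪ E₂ ∪ E₃ = M.E ∧
      E₁.ncard = n ∧ E₂.ncard = n ∧ E₃.ncard = k ∧
      (∀ I : Set α, M.Indep I ↔
        (I ⊆ M.E ∧ I.ncard ≤ n ∧ I ≠ E₁ ∧ I ≠ E₂ ∧ ¬ E₃ ⊆ I))) ↔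
    (∃ C : Set α, M.Circuit C ∧ ¬ M.Spanning C ∧ M.FreelyPlaced C ∧ M.Coindep C ∧
      2 ≤ C.ncard ∧ ∃ (m : ℕ) (C₁ C₂ : Set α), 2 ≤ m ∧ Disjoint C₁ C₂ ∧
        C₁ ∪ C₂ = M.E \ C ∧ C₁.ncard = m ∧ C₂.ncard = m ∧
        (∀ I : Set α, (M.delete' C).Indep I ↔
          (I ⊆ M.E \ C ∧ I.ncard ≤ m ∧ I ≠ C₁ ∧ I ≠ C₂))) := by
  constructor
  · rintro ⟨n, k, E₁, E₂, E₃, hk, hkn, h12, h13, h23, hE, hE₁, hE₂, hE₃, hind⟩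
    obtain ⟨hC, hCsp, hfp, hCco, hground, hdel⟩ := freelyPlaced_isCircuit_of_indep_iff_bnk
      (by omega) (nonempty_of_ncard_ne_zero (by omega)) (by omega) h12 h13 h23 hE hE₁ hE₂ hind
    exact ⟨E₃, circuit_iff_isCircuit.2 hC, hCsp, hfp, hCco, hE₃ ▸ hk,
      n, E₁, E₂, by omega, h12, hground, hE₁, hE₂, hdel⟩
  · rintro ⟨C, hC, hCsp, hfp, hCco, hC2, m, C₁, C₂, hm, h12, hunion, hC₁, hC₂, hdel⟩
    have hCE : C ⊆ M.E := hC.1.subset_ground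
    obtain ⟨hCm, hind⟩ := hfp.indep_iff_bnk (circuit_iff_isCircuit.1 hC) hCsp hCco hm h12
      hunion hC₁ hC₂ hdel
    have hsub : C₁ ∪ C₂ ⊆ M.E \ C := hunion.le
    exact ⟨m, C.ncard, C₁, C₂, C, hC2, hCm, h12,
      disjoint_sdiff_left.mono_left (subset_union_left.trans hsub),
      disjoint_sdiff_left.mono_left (subset_union_right.trans hsub),
      by rw [hunion, sdiff_union_of_subset hCE], hC₁, hC₂, rfl, hind⟩

end Matroid
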